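/- arXiv:1409.6022 — 5 statements merged into one kernel-verified Lean document; each statement's English description precedes it below -/
import Mathlib

section
/- In the conditional one-node model, the probability that none of the events E_1,…,E_m occurs is at most exp(−m·q + m²·q² + (q·p/K)·Σ_{1≤i<j≤m} |S_i* ∩ S_j*|). -/
open Finset

noncomputable def linkProb (K P : ℕ) : ℝ :=
  1 - ((P - K).choose K : ℝ) / (P.choose K : ℝ)

-- Probability of an event `A` in the conditional one-node model: `S` is a uniformly
-- random `K`-element subset of the pool `Fin P`, and `B : Fin m → Bool` is a vector of
-- independent Bernoulli(`p`) random variables, independent of `S`.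
open Classical in
noncomputable def condProb (m K P : ℕ) (p : ℝ)
    (A : Finset (Fin P) → (Fin m → Bool) → Prop) : ℝ :=
  (1 / (P.choose K : ℝ)) *
    ∑ S : {S : Finset (Fin P) // S.card = K},
      ∑ B : Fin m → Bool,
        ((∏ i : Fin m, if B i then p else 1 - p) *
          (if A S.1 B then 1 else 0))

/-!
Averaging over `B` first, the probability is the mean over `K`-sets `S` of
`∏ᵢ (1 - p·[S meets Sᵢ*])`, and the degree-two Bonferroni bound
`∏ (1 - aᵢ) ≤ 1 - ∑ aᵢ + ∑_{i<j} aᵢ aⱼ` reduces it to first and second moments of the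
hitting indicators. The first moment is `s`. If `|Sᵢ* ∩ Sⱼ*| = t`, inclusion–exclusion gives
`P[S meets both] = 1 - 2 C(P-K,K)/C(P,K) + C(P-2K+t,K)/C(P,K)`, and two estimates on binomial
coefficients, `C(P-a-b,K) C(P,K) ≤ C(P-a,K) C(P-b,K)` and the convexity of `t ↦ C(P-K+t,K)`,
bound this by `s² + s t / K`. Summing, the mean is at most `1 - mq + m²q² + (qp/K) ∑ t`, and
`1 + x ≤ eˣ` finishes.
-/

-- Factorwise in the descending factorials this is `(x - a - b) x ≤ (x - a)(x - b)`; where the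
-- truncated subtraction bites, the left-hand factor is `0`.
theorem Nat.choose_sub_sub_mul_choose_le (n a b k : ℕ) :
    (n - a - b).choose k * n.choose k ≤ (n - a).choose k * (n - b).choose k := by
  have hfac : (n - a - b).descFactorial k * n.descFactorial k ≤
      (n - a).descFactorial k * (n - b).descFactorial k := by
    simp only [Nat.descFactorial_eq_prod_range, ← prod_mul_distrib]
    refine prod_le_prod' fun j _ => ?_
    rcases le_or_gt (a + b + j) n with h | h
    · obtain ⟨x, rfl⟩ := Nat.exists_eq_add_of_le h
      rw [show a + b + j + x - a - b - j = x by omega, show a + b + j + x - j = x + a + b by omega,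
        show a + b + j + x - a - j = x + b by omega, show a + b + j + x - b - j = x + a by omega]
      nlinarith [Nat.zero_le (a * b)]
    · simp [show n - a - b - j = 0 by omega]
  simp only [Nat.descFactorial_eq_factorial_mul_choose] at hfac
  refine Nat.le_of_mul_le_mul_left ?_ (Nat.mul_pos k.factorial_pos k.factorial_pos)
  linarith

theorem mul_le_chord_of_monotone_sub (f : ℕ → ℝ) (hf : Monotone fun j => f (j + 1) - f j)
    {t k : ℕ} (htk : t ≤ k) : (k : ℝ) * f t ≤ (k - t) * f 0 + t * f k := by
  induction k, htk using Nat.le_induction with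
  | base => simp
  | succ k htk ih =>
    have : f t - f 0 ≤ t * (f (k + 1) - f k) := by
      rw [← sum_range_sub f t]
      simpa using sum_le_card_nsmul (range t) _ _ fun j hj => hf (by simp at hj; omega)
    push_cast
    linarith

theorem Nat.mul_choose_add_le_chord {n k t : ℕ} (hk : 1 ≤ k) (ht : t ≤ k) :
    (k : ℝ) * (n + t).choose k ≤ (k - t) * n.choose k + t * (n + k).choose k := by
  obtain ⟨k, rfl⟩ := Nat.exists_eq_add_of_le' hk
  have hincr : ∀ j, ((n + (j + 1)).choose (k + 1) : ℝ) - (n + j).choose (k + 1)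
      = (n + j).choose k := fun j => by
    rw [← add_assoc, Nat.choose_succ_succ']; push_cast; ring
  have := mul_le_chord_of_monotone_sub (fun j => ((n + j).choose (k + 1) : ℝ))
    (fun i j hij => by simp only [hincr]; exact_mod_cast Nat.choose_le_choose _ (by omega)) ht
  simpa using this

theorem Finset.one_sub_sum_le_prod_one_sub {ι : Type*} (s : Finset ι) {a : ι → ℝ}
    (h0 : ∀ i ∈ s, 0 ≤ a i) (h1 : ∀ i ∈ s, a i ≤ 1) :
    1 - ∑ i ∈ s, a i ≤ ∏ i ∈ s, (1 - a i) := by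
  induction s using Finset.cons_induction with
  | empty => simp
  | cons k s hk ih =>
    simp only [forall_mem_cons] at h0 h1
    rw [prod_cons, sum_cons]
    have hs : 0 ≤ ∑ i ∈ s, a i := sum_nonneg h0.2
    nlinarith [mul_le_mul_of_nonneg_left (ih h0.2 h1.2) (sub_nonneg.mpr h1.1), mul_nonneg h0.1 hs]

section Bonferroni

variable {ι : Type*} [Fintype ι] [LinearOrder ι]

theorem sum_filter_fst_lt_snd_mul (a : ι → ℝ) :
    ∑ e ∈ univ.filter (fun e : ι × ι => e.1 < e.2), a e.1 * a e.2 =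
      ∑ i, a i * ∑ j with j < i, a j := by
  simp only [sum_filter, Fintype.sum_prod_type, mul_sum]
  rw [sum_comm]
  simp [mul_comm]

theorem prod_one_sub_le_one_sub_sum_add_sum_pairs {a : ι → ℝ}
    (h0 : ∀ i, 0 ≤ a i) (h1 : ∀ i, a i ≤ 1) :
    ∏ i, (1 - a i) ≤
      1 - ∑ i, a i + ∑ e ∈ univ.filter (fun e : ι × ι => e.1 < e.2), a e.1 * a e.2 := by
  rw [prod_one_sub_ordered, sum_filter_fst_lt_snd_mul]
  have : ∀ i, a i * (1 - ∑ j with j < i, a j) ≤ a i * ∏ j with j < i, (1 - a j) := fun i =>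
    mul_le_mul_of_nonneg_left
      (one_sub_sum_le_prod_one_sub _ (fun j _ => h0 j) fun j _ => h1 j) (h0 i)
  have := sum_le_sum fun i (_ : i ∈ univ) => this i
  simp only [mul_sub, mul_one, sum_sub_distrib] at this
  linarith

end Bonferroni

section Hitting

variable {α : Type*} [DecidableEq α]

def hitIndicator (S A : Finset α) : ℝ := if (S ∩ A).Nonempty then 1 else 0

theorem hitIndicator_nonneg (S A : Finset α) : 0 ≤ hitIndicator S A := by
  unfold hitIndicator; split_ifs <;> norm_num

theorem hitIndicator_le_one (S A : Finset α) : hitIndicator S A ≤ 1 := by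
  unfold hitIndicator; split_ifs <;> norm_num

theorem hitIndicator_eq_one_sub (S A : Finset α) :
    hitIndicator S A = 1 - if Disjoint S A then 1 else 0 := by
  unfold hitIndicator
  split_ifs <;> simp_all [disjoint_iff_inter_eq_empty, nonempty_iff_ne_empty]

theorem hitIndicator_mul_hitIndicator (S A B : Finset α) :
    hitIndicator S A * hitIndicator S B =
      hitIndicator S A + hitIndicator S B - hitIndicator S (A ∪ B) := by
  simp only [hitIndicator_eq_one_sub, disjoint_union_right]
  split_ifs <;> simp_all

variable [Fintype α]

theorem filter_powersetCard_univ_disjoint (k : ℕ) (A : Finset α) :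
    {S ∈ powersetCard k (univ : Finset α) | Disjoint S A} = powersetCard k Aᶜ := by
  ext S
  simp [mem_powersetCard, subset_compl_iff_disjoint_right, and_comm]

theorem sum_powersetCard_hitIndicator (k : ℕ) (A : Finset α) :
    ∑ S ∈ powersetCard k univ, hitIndicator S A =
      (Fintype.card α).choose k - (Fintype.card α - #A).choose k := by
  simp only [hitIndicator_eq_one_sub, sum_sub_distrib, ← sum_filter, sum_const,
    filter_powersetCard_univ_disjoint, card_powersetCard, card_compl, card_univ]
  simp

theorem sum_powersetCard_hitIndicator_mul (k : ℕ) (A B : Finset α) :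
    ∑ S ∈ powersetCard k univ, hitIndicator S A * hitIndicator S B =
      (Fintype.card α).choose k - (Fintype.card α - #A).choose k
        - (Fintype.card α - #B).choose k + (Fintype.card α - #(A ∪ B)).choose k := by
  simp only [hitIndicator_mul_hitIndicator, sum_sub_distrib, sum_add_distrib,
    sum_powersetCard_hitIndicator]
  ring

theorem sum_powersetCard_hitIndicator_of_card {k : ℕ} {A : Finset α}
    (hkn : k ≤ Fintype.card α) (hA : #A = k) :
    ∑ S ∈ powersetCard k univ, hitIndicator S A =
      (Fintype.card α).choose k * linkProb k (Fintype.card α) := by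
  have : ((Fintype.card α).choose k : ℝ) ≠ 0 := by exact_mod_cast (Nat.choose_pos hkn).ne'
  rw [sum_powersetCard_hitIndicator, hA, linkProb]
  field_simp

theorem sum_powersetCard_hitIndicator_mul_le {k : ℕ} {A B : Finset α} (hk : 1 ≤ k)
    (hkn : k ≤ Fintype.card α) (hA : #A = k) (hB : #B = k) :
    ∑ S ∈ powersetCard k univ, hitIndicator S A * hitIndicator S B ≤
      (Fintype.card α).choose k * (linkProb k (Fintype.card α) ^ 2 +
        linkProb k (Fintype.card α) * #(A ∩ B) / k) := by
  set n := Fintype.card α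
  set t := #(A ∩ B)
  have htk : t ≤ k := hA ▸ card_le_card inter_subset_left
  have hunion : #(A ∪ B) = k + (k - t) := by
    have := card_union_add_card_inter A B
    omega
  have hprod : ((n - #(A ∪ B)).choose k : ℝ) * n.choose k ≤
      (n - k).choose k * (n - k + t).choose k := by
    rw [hunion, ← Nat.sub_sub, show n - k + t = n - (k - t) by omega]
    exact_mod_cast Nat.choose_sub_sub_mul_choose_le n k (k - t) k
  have hchord := Nat.mul_choose_add_le_chord (n := n - k) hk htk
  rw [Nat.sub_add_cancel hkn] at hchord
  rw [sum_powersetCard_hitIndicator_mul, hA, hB, linkProb]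
  set c : ℝ := ((n.choose k : ℕ) : ℝ)
  set a : ℝ := (((n - k).choose k : ℕ) : ℝ)
  have hc : 0 < c := Nat.cast_pos.mpr (Nat.choose_pos hkn)
  have hk' : (0 : ℝ) < k := by exact_mod_cast hk
  have key : ((n - #(A ∪ B)).choose k : ℝ) * c * k ≤ k * a ^ 2 + (c - a) * t * c := by
    linarith [mul_le_mul_of_nonneg_right hprod hk'.le,
      mul_le_mul_of_nonneg_left hchord (Nat.cast_nonneg' ((n - k).choose k)),
      mul_nonneg (Nat.cast_nonneg t : (0 : ℝ) ≤ t) (sq_nonneg (c - a))]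
  have : c * ((1 - a / c) ^ 2 + (1 - a / c) * t / k) =
      (k * (c - a) ^ 2 + (c - a) * t * c) / (c * k) := by
    field_simp
  rw [this, le_div_iff₀ (by positivity)]
  linarith

theorem sum_prod_one_sub_hitIndicator_le {ι : Type*} [Fintype ι] [LinearOrder ι] {k : ℕ}
    (hk : 1 ≤ k) (hkn : k ≤ Fintype.card α) {p : ℝ} (hp0 : 0 ≤ p) (hp1 : p ≤ 1)
    {A : ι → Finset α} (hA : ∀ i, #(A i) = k) :
    ∑ S ∈ powersetCard k univ, ∏ i, (1 - p * hitIndicator S (A i)) ≤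
      (Fintype.card α).choose k *
        (1 - Fintype.card ι * (p * linkProb k (Fintype.card α)) +
          Fintype.card ι ^ 2 * (p * linkProb k (Fintype.card α)) ^ 2 +
          p * linkProb k (Fintype.card α) * p / k *
            ∑ e ∈ univ.filter (fun e : ι × ι => e.1 < e.2), (#(A e.1 ∩ A e.2) : ℝ)) := by
  set n := Fintype.card α
  set c : ℝ := ((n.choose k : ℕ) : ℝ)
  set s := linkProb k n
  set T := univ.filter (fun e : ι × ι => e.1 < e.2)
  have hT : (#T : ℝ) ≤ Fintype.card ι ^ 2 := by
    exact_mod_cast (card_filter_le _ _).trans_eq (by simp [sq])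
  calc ∑ S ∈ powersetCard k univ, ∏ i, (1 - p * hitIndicator S (A i))
      ≤ ∑ S ∈ powersetCard k univ, (1 - ∑ i, p * hitIndicator S (A i) +
          ∑ e ∈ T, p * hitIndicator S (A e.1) * (p * hitIndicator S (A e.2))) :=
        sum_le_sum fun S _ => prod_one_sub_le_one_sub_sum_add_sum_pairs
          (fun i => mul_nonneg hp0 (hitIndicator_nonneg S (A i)))
          (fun i => mul_le_one₀ hp1 (hitIndicator_nonneg S (A i)) (hitIndicator_le_one S (A i)))
    _ = c - Fintype.card ι * p * (c * s) +
          p ^ 2 * ∑ e ∈ T, ∑ S ∈ powersetCard k univ,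
            hitIndicator S (A e.1) * hitIndicator S (A e.2) := by
        simp only [sum_add_distrib, sum_sub_distrib, sum_const, card_powersetCard, card_univ,
          nsmul_eq_mul, mul_one]
        rw [sum_comm, sum_comm (s := powersetCard k univ)]
        simp only [← mul_sum, sum_powersetCard_hitIndicator_of_card hkn (hA _), sum_const,
          card_univ, nsmul_eq_mul]
        simp_rw [mul_sum]
        simp only [c, s, n]
        ring_nf
    _ ≤ c - Fintype.card ι * p * (c * s) +
          p ^ 2 * ∑ e ∈ T, c * (s ^ 2 + s * #(A e.1 ∩ A e.2) / k) := by
        gcongr with e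
        exact sum_powersetCard_hitIndicator_mul_le hk hkn (hA e.1) (hA e.2)
    _ = c * (1 - Fintype.card ι * (p * s) + #T * (p * s) ^ 2 +
          p * s * p / k * ∑ e ∈ T, (#(A e.1 ∩ A e.2) : ℝ)) := by
        simp only [mul_add, sum_add_distrib, sum_const, nsmul_eq_mul, ← mul_sum, ← sum_div]
        ring
    _ ≤ _ := by gcongr

end Hitting

theorem sum_bernoulli_forall_not {ι : Type*} [Fintype ι] [DecidableEq ι] (p : ℝ)
    (M : ι → Prop) [DecidablePred M] :
    ∑ B : ι → Bool, (∏ i, if B i then p else 1 - p) *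
        (if ∀ i, ¬(B i = true ∧ M i) then 1 else 0) =
      ∏ i, (1 - p * if M i then 1 else 0) := by
  simp_rw [← Fintype.prod_boole, ← prod_mul_distrib]
  rw [← Fintype.prod_sum (fun i (b : Bool) => (if b then p else 1 - p) *
    if ¬(b = true ∧ M i) then 1 else 0)]
  refine prod_congr rfl fun i _ => ?_
  by_cases h : M i <;> simp [h]

theorem condProb_forall_not_eq {m K P : ℕ} (p : ℝ)
    (M : Finset (Fin P) → Fin m → Prop) [∀ S, DecidablePred (M S)] :
    condProb m K P p (fun S B => ∀ i, ¬(B i = true ∧ M S i)) =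
      (1 / (P.choose K : ℝ)) *
        ∑ S ∈ powersetCard K univ, ∏ i, (1 - p * if M S i then 1 else 0) := by
  rw [sum_subtype (powersetCard K univ) (p := fun S : Finset (Fin P) => S.card = K) (by simp)]
  unfold condProb
  congr 1
  refine sum_congr rfl fun S _ => ?_
  convert sum_bernoulli_forall_not p (M S.1)

theorem stmt8_general (m K P : ℕ) (hK : 1 ≤ K) (hP : 3 * K ≤ P)
    (p : ℝ) (hp0 : 0 ≤ p) (hp1 : p ≤ 1)
    (Sstar : Fin m → Finset (Fin P)) (hS : ∀ i, (Sstar i).card = K) :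
    condProb m K P p
        (fun S B => ∀ i : Fin m, ¬ (B i = true ∧ (S ∩ Sstar i).Nonempty)) ≤
      Real.exp (-(m : ℝ) * (p * linkProb K P) + (m : ℝ) ^ 2 * (p * linkProb K P) ^ 2 +
        (p * linkProb K P) * p / (K : ℝ) *
        (∑ e ∈ Finset.univ.filter (fun e : Fin m × Fin m => e.1 < e.2),
          ((Sstar e.1 ∩ Sstar e.2).card : ℝ))) := by
  have hKP : K ≤ P := by omega
  have hC : (0 : ℝ) < P.choose K := Nat.cast_pos.mpr (Nat.choose_pos hKP)
  have hsum := sum_prod_one_sub_hitIndicator_le (α := Fin P) (ι := Fin m) hK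
    (by simpa using hKP) hp0 hp1 hS
  simp only [Fintype.card_fin] at hsum
  rw [condProb_forall_not_eq, one_div_mul_eq_div, div_le_iff₀' hC]
  refine hsum.trans (mul_le_mul_of_nonneg_left ?_ hC.le)
  exact (le_of_eq (by ring)).trans (Real.add_one_le_exp _)

theorem stmt8 (m K P : ℕ) (hm : 1 ≤ m) (hK : 1 ≤ K) (hP : 3 * K ≤ P)
    (p : ℝ) (hp0 : 0 ≤ p) (hp1 : p ≤ 1)
    (Sstar : Fin m → Finset (Fin P)) (hS : ∀ i, (Sstar i).card = K) :
    condProb m K P p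
        (fun S B => ∀ i : Fin m, ¬ (B i = true ∧ (S ∩ Sstar i).Nonempty)) ≤
      Real.exp (-(m : ℝ) * (p * linkProb K P) + (m : ℝ) ^ 2 * (p * linkProb K P) ^ 2 +
        (p * linkProb K P) * p / (K : ℝ) *
        (∑ e ∈ Finset.univ.filter (fun e : Fin m × Fin m => e.1 < e.2),
          ((Sstar e.1 ∩ Sstar e.2).card : ℝ))) :=
  stmt8_general m K P hK hP p hp0 hp1 Sstar hS
end

section
/- In the conditional one-node model, for any integer h ≥ 0, writing r_i for the probability that E_i occurs while E_j does not occur for every j ≠ i, one has Π_{i=1}^{m} r_i^h ≥ q^{h·m}·(1 − 2·h·m²·q − (2·h·p/K)·Σ_{1≤i<j≤m} |S_i* ∩ S_j*|). -/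
/-!
Write `M a = C(P - a, K) / C(P, K)` (`missProb P K a`) for the probability that `S` misses a fixed
`a`-set, so `s = 1 - M K`. By Bonferroni, `r_i ≥ P[E_i] - ∑_{j ≠ i} P[E_i ∧ E_j]`. The coins are
independent of `S`, and inclusion–exclusion gives `P[E_i ∧ E_j] = p² (1 - 2 M K + M (2K - t))` with
`t = |S_i* ∩ S_j*|`. The ratios `M (a + 1) / M a = (P - K - a) / (P - a)` decrease in `a`, which
makes `M` submultiplicative and convex on `[0, K]`, so
`M (2K - t) ≤ M (K - t) · M K ≤ (t / K + (1 - t / K) M K) · M K ≤ (M K)² + (t / K) (1 - M K)`.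
Hence `P[E_i ∧ E_j] ≤ q (q + p t / K)` and `r_i ≥ q (1 - δ_i)` with
`δ_i = ∑_{j ≠ i} (q + p t_ij / K)`; finally `∏ (1 - δ_i)^h ≥ 1 - h ∑ δ_i` by Bernoulli's inequality
and `∏ x_i ≥ 1 - ∑ (1 - x_i)` on `[0, 1]`.
-/

open Finset

lemma le_chord_of_sub_le_sub {f : ℕ → ℝ} {n : ℕ}
    (hf : ∀ j, j + 2 ≤ n → f (j + 1) - f j ≤ f (j + 2) - f (j + 1)) {a : ℕ} (ha : a ≤ n) :
    n * f a ≤ (n - a) * f 0 + a * f n := by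
  -- Chebyshev's sum inequality for the increasing increments of `f` and the indicator of `[0, a)`
  set D : ℕ → ℝ := fun j => f (j + 1) - f j
  have hD : MonotoneOn D (range n) := by
    rw [coe_range]
    refine monotoneOn_of_le_add_one Set.ordConnected_Iio fun j _ _ hj => hf j ?_
    simp only [Set.mem_Iio] at hj
    omega
  have hanti : AntivaryOn D (fun j => if j < a then (1 : ℝ) else 0) (range n) := by
    intro i hi j hj hij
    have hji : j < i := by
      simp only at hij
      split_ifs at hij <;> first | omega | norm_num at hij
    exact hD hj hi hji.le
  have hcheb := hanti.card_mul_sum_le_sum_mul_sum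
  have hfilter : (range n).filter (· < a) = range a := by
    ext j; simp only [mem_filter, mem_range]; omega
  simp only [mul_ite, mul_one, mul_zero, ← sum_filter, hfilter, D, sum_range_sub, sum_const,
    card_range, nsmul_eq_mul] at hcheb
  linarith

lemma one_sub_sum_le_prod {ι : Type*} (s : Finset ι) {x : ι → ℝ} (h0 : ∀ i ∈ s, 0 ≤ x i)
    (h1 : ∀ i ∈ s, x i ≤ 1) : 1 - ∑ i ∈ s, (1 - x i) ≤ ∏ i ∈ s, x i := by
  classical
  induction s using Finset.induction_on with
  | empty => simp
  | insert a s ha ih =>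
    rw [prod_insert ha, sum_insert ha]
    have ih' := ih (fun i hi => h0 i (mem_insert_of_mem hi))
      (fun i hi => h1 i (mem_insert_of_mem hi))
    have hs : 0 ≤ ∑ i ∈ s, (1 - x i) :=
      sum_nonneg fun i hi => sub_nonneg.2 (h1 i (mem_insert_of_mem hi))
    nlinarith [mul_le_mul_of_nonneg_left ih' (h0 a (mem_insert_self a s)),
      h1 a (mem_insert_self a s)]

lemma pow_mul_one_sub_sum_le_prod_pow {ι : Type*} (s : Finset ι) {q : ℝ} (hq : 0 ≤ q)
    {r δ : ι → ℝ} (hr0 : ∀ i ∈ s, 0 ≤ r i) (hδ : ∀ i ∈ s, 0 ≤ δ i)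
    (hr : ∀ i ∈ s, q * (1 - δ i) ≤ r i) (h : ℕ) :
    q ^ (h * #s) * (1 - h * ∑ i ∈ s, δ i) ≤ ∏ i ∈ s, r i ^ h := by
  set x : ι → ℝ := fun i => max 0 (1 - δ i)
  have hx0 : ∀ i, 0 ≤ x i := fun i => le_max_left _ _
  have hx1 : ∀ i ∈ s, x i ≤ 1 := fun i hi => max_le zero_le_one (by linarith [hδ i hi])
  have hqx : ∀ i ∈ s, q * x i ≤ r i := fun i hi => by
    rcases max_cases 0 (1 - δ i) with ⟨hmax, _⟩ | ⟨hmax, _⟩ <;> simp only [x, hmax]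
    · simpa using hr0 i hi
    · exact hr i hi
  have hpow : ∀ i ∈ s, 1 - x i ^ h ≤ h * δ i := fun i hi => by
    have hbern := one_add_mul_le_pow (show (-2 : ℝ) ≤ x i - 1 by linarith [hx0 i]) h
    rw [add_sub_cancel] at hbern
    have : 1 - x i ≤ δ i := by linarith [le_max_right 0 (1 - δ i)]
    nlinarith [h.cast_nonneg (α := ℝ)]
  calc q ^ (h * #s) * (1 - h * ∑ i ∈ s, δ i)
      ≤ q ^ (h * #s) * (1 - ∑ i ∈ s, (1 - x i ^ h)) := by
        gcongr
        rw [mul_sum]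
        exact sum_le_sum hpow
    _ ≤ q ^ (h * #s) * ∏ i ∈ s, x i ^ h := by
        gcongr
        exact one_sub_sum_le_prod s (fun i _ => pow_nonneg (hx0 i) h)
          (fun i hi => pow_le_one₀ (hx0 i) (hx1 i hi))
    _ = ∏ i ∈ s, (q * x i) ^ h := by
        simp_rw [mul_pow, prod_mul_distrib, prod_const, ← pow_mul]
    _ ≤ ∏ i ∈ s, r i ^ h :=
        prod_le_prod (fun i _ => pow_nonneg (mul_nonneg hq (hx0 i)) h)
          fun i hi => pow_le_pow_left₀ (mul_nonneg hq (hx0 i)) (hqx i hi) h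

lemma sum_sum_erase_eq_two_nsmul_sum_lt {ι M : Type*} [Fintype ι] [LinearOrder ι] [AddCommMonoid M]
    {g : ι → ι → M} (hg : ∀ i j, g i j = g j i) :
    ∑ i, ∑ j ∈ univ.erase i, g i j =
      2 • ∑ e ∈ univ.filter (fun e : ι × ι => e.1 < e.2), g e.1 e.2 := by
  have hsplit : ∀ i, ∑ j ∈ univ.erase i, g i j =
      ∑ j, ((if i < j then g i j else 0) + if j < i then g j i else 0) := fun i => by
    rw [← filter_ne' univ i, sum_filter]
    refine sum_congr rfl fun j _ => ?_
    rcases lt_trichotomy i j with hij | rfl | hij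
    · simp [hij, hij.ne', hij.not_gt]
    · simp
    · simp [hij, hij.ne, hij.not_gt, hg i j]
  simp only [hsplit, sum_add_distrib]
  rw [sum_comm (f := fun i j => if j < i then g j i else 0), two_nsmul, sum_filter,
    Fintype.sum_prod_type]

lemma sum_sum_erase_add_le {ι : Type*} [Fintype ι] [LinearOrder ι] {c : ℝ} (hc : 0 ≤ c)
    {g : ι → ι → ℝ} (hg : ∀ i j, g i j = g j i) :
    ∑ i, ∑ j ∈ univ.erase i, (c + g i j) ≤
      Fintype.card ι ^ 2 * c + 2 * ∑ e ∈ univ.filter (fun e : ι × ι => e.1 < e.2), g e.1 e.2 := by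
  simp only [sum_add_distrib, sum_sum_erase_eq_two_nsmul_sum_lt hg, nsmul_eq_mul, Nat.cast_ofNat]
  gcongr
  calc ∑ i, ∑ j ∈ univ.erase i, c ≤ ∑ i : ι, ∑ j : ι, c :=
        sum_le_sum fun i _ => sum_le_sum_of_subset_of_nonneg (erase_subset i univ) fun _ _ _ => hc
    _ = Fintype.card ι ^ 2 * c := by simp [sq, mul_assoc]

noncomputable def missProb (P K a : ℕ) : ℝ := ((P - a).choose K : ℝ) / (P.choose K : ℝ)

section MissProb

variable {P K : ℕ}

lemma missProb_zero (h : K ≤ P) : missProb P K 0 = 1 := by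
  rw [missProb, Nat.sub_zero, div_self]
  exact_mod_cast (Nat.choose_pos h).ne'

lemma missProb_nonneg (a : ℕ) : 0 ≤ missProb P K a := by
  unfold missProb; positivity

lemma missProb_le_one (a : ℕ) : missProb P K a ≤ 1 :=
  div_le_one_of_le₀ (by exact_mod_cast Nat.choose_le_choose K (Nat.sub_le P a)) (by positivity)

lemma missProb_succ {a : ℕ} (h : a + K < P) :
    missProb P K (a + 1) = missProb P K a * ((P - K - a) / (P - a)) := by
  have hrec := Nat.choose_mul_succ_eq (P - (a + 1)) K
  rw [show P - (a + 1) + 1 = P - a by omega] at hrec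
  have hcast : ((P - (a + 1)).choose K : ℝ) * (P - a) = ((P - a).choose K : ℝ) * (P - K - a) := by
    have := congrArg (Nat.cast (R := ℝ)) hrec
    push_cast [Nat.cast_sub (show a ≤ P by omega), Nat.cast_sub (show K ≤ P - a by omega)] at this
    linarith
  have hPa : (P : ℝ) - a ≠ 0 := by
    have : (a : ℝ) < P := by exact_mod_cast (show a < P by omega)
    linarith
  have hC : (P.choose K : ℝ) ≠ 0 := by exact_mod_cast (Nat.choose_pos (by omega)).ne'
  unfold missProb
  field_simp
  linear_combination hcast

lemma missProb_add_le_mul {a b : ℕ} (h : a + b + K ≤ P) :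
    missProb P K (a + b) ≤ missProb P K a * missProb P K b := by
  induction b with
  | zero => rw [add_zero, missProb_zero (by omega), mul_one]
  | succ b ih =>
    have hab : (a : ℝ) + b + 1 + K ≤ P := by exact_mod_cast h
    have ha : (0 : ℝ) ≤ a := a.cast_nonneg
    have hratio : ((P : ℝ) - K - (a + b)) / (P - (a + b)) ≤ (P - K - b) / (P - b) := by
      rw [div_le_div_iff₀ (by linarith) (by linarith)]
      nlinarith [K.cast_nonneg (α := ℝ)]
    calc missProb P K (a + (b + 1))
        = missProb P K (a + b) * ((P - K - (a + b : ℕ)) / (P - (a + b : ℕ))) := by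
          rw [← add_assoc, missProb_succ (by omega)]
      _ ≤ missProb P K a * missProb P K b * ((P - K - b) / (P - b)) := by
          push_cast
          exact mul_le_mul (ih (by omega)) hratio (div_nonneg (by linarith) (by linarith))
            (mul_nonneg (missProb_nonneg a) (missProb_nonneg b))
      _ = missProb P K a * missProb P K (b + 1) := by
          rw [missProb_succ (by omega), mul_assoc]

lemma missProb_sub_le_sub (hK : 0 < K) {j : ℕ} (h : j + 1 + K < P) :
    missProb P K (j + 1) - missProb P K j ≤ missProb P K (j + 2) - missProb P K (j + 1) := by
  have hj : (j : ℝ) + 1 + K < P := by exact_mod_cast h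
  have hK' : (1 : ℝ) ≤ K := by exact_mod_cast hK
  have h0 : (P : ℝ) - j ≠ 0 := by linarith
  have h1 : (P : ℝ) - (j + 1) ≠ 0 := by linarith
  rw [missProb_succ (a := j + 1) (by omega), missProb_succ (a := j) (by omega), ← sub_nonneg]
  push_cast
  set M := missProb P K j
  have key : M * ((P - K - j) / (P - j)) * ((P - K - (j + 1)) / (P - (j + 1))) -
        M * ((P - K - j) / (P - j)) - (M * ((P - K - j) / (P - j)) - M) =
      M * (K * (K - 1) / ((P - j) * (P - (j + 1)))) := by
    field_simp
    ring
  rw [key]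
  exact mul_nonneg (missProb_nonneg j)
    (div_nonneg (by nlinarith) (mul_nonneg (by linarith) (by linarith)))

lemma missProb_two_mul_sub_le (hK : 0 < K) (hP : 3 * K ≤ P) {t : ℕ} (ht : t ≤ K) :
    missProb P K (2 * K - t) ≤ missProb P K K ^ 2 + t / K * (1 - missProb P K K) := by
  have hKR : (0 : ℝ) < K := by exact_mod_cast hK
  have hsub := missProb_add_le_mul (P := P) (K := K) (a := K - t) (b := K) (by omega)
  rw [show K - t + K = 2 * K - t by omega] at hsub
  have hchord := le_chord_of_sub_le_sub (f := missProb P K)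
    (fun j hj => missProb_sub_le_sub hK (by omega)) (Nat.sub_le K t)
  rw [missProb_zero (by omega), Nat.cast_sub ht] at hchord
  have hchord' : missProb P K (K - t) ≤ t / K + (1 - t / K) * missProb P K K := by
    have e : t / K + (1 - t / K) * missProb P K K = (t + (K - t) * missProb P K K) / K := by
      field_simp
    rw [e, le_div_iff₀ hKR]
    linarith
  have hM0 := missProb_nonneg (P := P) (K := K) K
  have ht0 : (0 : ℝ) ≤ t / K := by positivity
  calc missProb P K (2 * K - t)
      ≤ (t / K + (1 - t / K) * missProb P K K) * missProb P K K :=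
        hsub.trans (mul_le_mul_of_nonneg_right hchord' hM0)
    _ = missProb P K K ^ 2 + t / K * (1 - missProb P K K) - t / K * (1 - missProb P K K) ^ 2 := by
        ring
    _ ≤ missProb P K K ^ 2 + t / K * (1 - missProb P K K) := by
        have := mul_nonneg ht0 (sq_nonneg (1 - missProb P K K))
        linarith

end MissProb

lemma linkProb_eq_one_sub_missProb (K P : ℕ) : linkProb K P = 1 - missProb P K K := rfl

lemma linkProb_nonneg (K P : ℕ) : 0 ≤ linkProb K P := by
  rw [linkProb_eq_one_sub_missProb]
  linarith [missProb_le_one (P := P) (K := K) K]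

lemma prod_bernoulli_nonneg {ι : Type*} [Fintype ι] {p : ℝ} (hp0 : 0 ≤ p) (hp1 : p ≤ 1)
    (B : ι → Bool) : 0 ≤ ∏ i, if B i then p else 1 - p :=
  prod_nonneg fun i _ => by split_ifs <;> linarith

lemma sum_prod_bernoulli_mul_prod_ite {ι : Type*} [Fintype ι] [DecidableEq ι] (p : ℝ)
    (T : Finset ι) :
    ∑ B : ι → Bool, (∏ i, if B i then p else 1 - p) * ∏ i ∈ T, (if B i then 1 else 0) =
      p ^ #T := by
  set g : ι → Bool → ℝ := fun i b => if b then p else if i ∈ T then 0 else 1 - p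
  calc _ = ∑ B : ι → Bool, ∏ i, g i (B i) := sum_congr rfl fun B _ => by
        rw [← Fintype.prod_ite_mem T, ← prod_mul_distrib]
        refine prod_congr rfl fun i _ => ?_
        by_cases hi : i ∈ T <;> cases B i <;> simp [g, hi]
    _ = ∏ i, ∑ b, g i b := (Fintype.prod_sum g).symm
    _ = ∏ i, if i ∈ T then p else 1 := prod_congr rfl fun i _ => by
      by_cases hi : i ∈ T <;> simp [g, hi]
    _ = p ^ #T := by rw [Fintype.prod_ite_mem, prod_const]

section Subsets

variable {α : Type*} [Fintype α] [DecidableEq α] (K : ℕ)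

lemma card_filter_powersetCard_disjoint (A : Finset α) :
    #{S ∈ powersetCard K (univ : Finset α) | Disjoint S A} = (Fintype.card α - #A).choose K := by
  have : {S ∈ powersetCard K (univ : Finset α) | Disjoint S A} = powersetCard K Aᶜ := by
    ext S
    simp [mem_powersetCard, subset_compl_iff_disjoint_right, and_comm]
  rw [this, card_powersetCard, card_compl]

lemma card_filter_powersetCard_not_disjoint (A : Finset α) :
    (#{S ∈ powersetCard K univ | ¬Disjoint S A} : ℝ) =
      (Fintype.card α).choose K - (Fintype.card α - #A).choose K := by
  have h := card_filter_add_card_filter_not (s := powersetCard K univ) (Disjoint · A)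
  rw [card_filter_powersetCard_disjoint, card_powersetCard, card_univ] at h
  have := congrArg (Nat.cast (R := ℝ)) h
  push_cast at this
  linarith

lemma card_filter_powersetCard_not_disjoint_and (A A' : Finset α) :
    (#{S ∈ powersetCard K univ | ¬Disjoint S A ∧ ¬Disjoint S A'} : ℝ) =
      (Fintype.card α).choose K - (Fintype.card α - #A).choose K -
        (Fintype.card α - #A').choose K + (Fintype.card α - #(A ∪ A')).choose K := by
  have hcompl := card_filter_add_card_filter_not (s := powersetCard K univ)
    (fun S => Disjoint S A ∨ Disjoint S A')
  have hunion := card_union_add_card_inter {S ∈ powersetCard K univ | Disjoint S A}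
    {S ∈ powersetCard K univ | Disjoint S A'}
  simp only [← filter_or, ← filter_and, ← disjoint_union_right, not_or] at hcompl hunion
  rw [card_filter_powersetCard_disjoint, card_filter_powersetCard_disjoint,
    card_filter_powersetCard_disjoint] at hunion
  rw [card_powersetCard, card_univ] at hcompl
  have hcompl' := congrArg (Nat.cast (R := ℝ)) hcompl
  have hunion' := congrArg (Nat.cast (R := ℝ)) hunion
  push_cast at hcompl' hunion'
  linarith

end Subsets

section OneNodeModel

variable {m K P : ℕ} {p : ℝ}

lemma condProb_nonneg (hp0 : 0 ≤ p) (hp1 : p ≤ 1) (A : Finset (Fin P) → (Fin m → Bool) → Prop) :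
    0 ≤ condProb m K P p A := by
  unfold condProb
  refine mul_nonneg (by positivity) (sum_nonneg fun S _ => sum_nonneg fun B _ => ?_)
  refine mul_nonneg (prod_nonneg fun i _ => ?_) (by split_ifs <;> norm_num)
  split_ifs <;> linarith

lemma condProb_forall_and (T : Finset (Fin m)) (Q : Finset (Fin P) → Prop) [DecidablePred Q] :
    condProb m K P p (fun S B => (∀ k ∈ T, B k = true) ∧ Q S) =
      p ^ #T * (#{S ∈ powersetCard K univ | Q S} / P.choose K) := by
  unfold condProb
  calc _ = 1 / (P.choose K : ℝ) * ∑ S : {S : Finset (Fin P) // S.card = K}, ∑ B : Fin m → Bool,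
        (∏ i, if B i then p else 1 - p) * (∏ k ∈ T, if B k then 1 else 0) *
          (if Q S.1 then 1 else 0) := by
        congr 1
        refine sum_congr rfl fun S _ => sum_congr rfl fun B _ => ?_
        rw [prod_boole]
        split_ifs <;> simp_all
    _ = _ := by
      simp only [← sum_mul, sum_prod_bernoulli_mul_prod_ite, ← mul_sum]
      rw [← sum_subtype (powersetCard K univ) (fun _ => mem_powersetCard_univ)
        (fun S => if Q S then (1 : ℝ) else 0), sum_boole]
      ring

lemma condProb_hit (hKP : K ≤ P) (i : Fin m) {A : Finset (Fin P)} (hA : #A = K) :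
    condProb m K P p (fun S B => B i = true ∧ (S ∩ A).Nonempty) = p * linkProb K P := by
  have hC : (P.choose K : ℝ) ≠ 0 := by exact_mod_cast (Nat.choose_pos hKP).ne'
  have hevent : (fun S (B : Fin m → Bool) => B i = true ∧ (S ∩ A).Nonempty) =
      fun S B => (∀ k ∈ ({i} : Finset (Fin m)), B k = true) ∧ ¬Disjoint S A := by
    simp [not_disjoint_iff_nonempty_inter]
  rw [hevent, condProb_forall_and, card_singleton, pow_one,
    card_filter_powersetCard_not_disjoint, hA, Fintype.card_fin, linkProb]
  field_simp

lemma condProb_hit_and_hit (hKP : K ≤ P) {i j : Fin m} (hij : i ≠ j) {A A' : Finset (Fin P)}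
    (hA : #A = K) (hA' : #A' = K) :
    condProb m K P p
        (fun S B => (B i = true ∧ (S ∩ A).Nonempty) ∧ (B j = true ∧ (S ∩ A').Nonempty)) =
      p ^ 2 * (1 - 2 * missProb P K K + missProb P K #(A ∪ A')) := by
  have hC : (P.choose K : ℝ) ≠ 0 := by exact_mod_cast (Nat.choose_pos hKP).ne'
  have hevent : (fun S (B : Fin m → Bool) =>
        (B i = true ∧ (S ∩ A).Nonempty) ∧ (B j = true ∧ (S ∩ A').Nonempty)) =
      fun S B => (∀ k ∈ ({i, j} : Finset (Fin m)), B k = true) ∧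
        (¬Disjoint S A ∧ ¬Disjoint S A') := by
    ext S B
    simp only [not_disjoint_iff_nonempty_inter, mem_insert, mem_singleton, forall_eq_or_imp,
      forall_eq]
    tauto
  rw [hevent, condProb_forall_and, card_pair hij, card_filter_powersetCard_not_disjoint_and,
    hA, hA',
    Fintype.card_fin, missProb, missProb]
  field_simp
  ring

lemma condProb_hit_and_hit_le (hK : 0 < K) (hP : 3 * K ≤ P) {i j : Fin m}
    (hij : i ≠ j) {A A' : Finset (Fin P)} (hA : #A = K) (hA' : #A' = K) :
    condProb m K P p
        (fun S B => (B i = true ∧ (S ∩ A).Nonempty) ∧ (B j = true ∧ (S ∩ A').Nonempty)) ≤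
      p * linkProb K P * (p * linkProb K P + p * #(A ∩ A') / K) := by
  have hunion : #(A ∪ A') = 2 * K - #(A ∩ A') := by
    have := card_union_add_card_inter A A'
    omega
  have hinter : #(A ∩ A') ≤ K := hA ▸ card_le_card inter_subset_left
  have hmiss := missProb_two_mul_sub_le hK hP hinter
  rw [condProb_hit_and_hit (by omega) hij hA hA', hunion]
  calc p ^ 2 * (1 - 2 * missProb P K K + missProb P K (2 * K - #(A ∩ A')))
      ≤ p ^ 2 * (1 - 2 * missProb P K K + (missProb P K K ^ 2 +
          #(A ∩ A') / K * (1 - missProb P K K))) := by gcongr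
    _ = _ := by rw [linkProb_eq_one_sub_missProb]; ring

lemma condProb_sub_sum_le (hp0 : 0 ≤ p) (hp1 : p ≤ 1) {ι : Type*} (s : Finset ι)
    (A : Finset (Fin P) → (Fin m → Bool) → Prop) (E : ι → Finset (Fin P) → (Fin m → Bool) → Prop) :
    condProb m K P p A - ∑ j ∈ s, condProb m K P p (fun S B => A S B ∧ E j S B) ≤
      condProb m K P p (fun S B => A S B ∧ ∀ j ∈ s, ¬E j S B) := by
  unfold condProb
  rw [← mul_sum, ← mul_sub]
  refine mul_le_mul_of_nonneg_left ?_ (by positivity)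
  rw [sum_comm (s := s), ← sum_sub_distrib]
  refine sum_le_sum fun S _ => ?_
  rw [sum_comm (s := s), ← sum_sub_distrib]
  refine sum_le_sum fun B _ => ?_
  rw [← mul_sum, ← mul_sub]
  refine mul_le_mul_of_nonneg_left ?_ (prod_bernoulli_nonneg hp0 hp1 B)
  beta_reduce
  by_cases hA : A S.1 B
  · by_cases hE : ∀ j ∈ s, ¬E j S.1 B
    · rw [if_pos (⟨hA, hE⟩ : A S.1 B ∧ ∀ j ∈ s, ¬E j S.1 B), if_pos hA,
        sum_eq_zero fun j hj => if_neg fun h => hE j hj h.2]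
      norm_num
    · obtain ⟨j, hj, hEj⟩ : ∃ j ∈ s, E j S.1 B := by simpa using hE
      rw [if_neg fun h : A S.1 B ∧ ∀ j ∈ s, ¬E j S.1 B => h.2 j hj hEj, if_pos hA, sub_nonpos]
      refine le_trans ?_ (single_le_sum (fun i _ => ?_) hj)
      · rw [if_pos (⟨hA, hEj⟩ : A S.1 B ∧ E j S.1 B)]
      · split_ifs <;> norm_num
  · simp [hA]

lemma mul_one_sub_sum_le_condProb_alone (hp0 : 0 ≤ p) (hp1 : p ≤ 1) (hK : 0 < K)
    (hP : 3 * K ≤ P) {A : Fin m → Finset (Fin P)} (hA : ∀ i, #(A i) = K) (i : Fin m) :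
    p * linkProb K P * (1 - ∑ j ∈ univ.erase i, (p * linkProb K P + p * #(A i ∩ A j) / K)) ≤
      condProb m K P p (fun S B => (B i = true ∧ (S ∩ A i).Nonempty) ∧
        ∀ j : Fin m, j ≠ i → ¬(B j = true ∧ (S ∩ A j).Nonempty)) := by
  have hbonf := condProb_sub_sum_le (K := K) hp0 hp1 (univ.erase i)
    (fun S B => B i = true ∧ (S ∩ A i).Nonempty) (fun j S B => B j = true ∧ (S ∩ A j).Nonempty)
  simp only [mem_erase, mem_univ, and_true] at hbonf
  refine le_trans ?_ hbonf
  rw [condProb_hit (by omega) i (hA i), mul_sub, mul_one, mul_sum]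
  gcongr with j hj
  exact condProb_hit_and_hit_le hK hP (ne_of_mem_erase hj).symm (hA i) (hA j)

end OneNodeModel

theorem stmt10_general (m K P : ℕ) (hK : 1 ≤ K) (hP : 3 * K ≤ P)
    (p : ℝ) (hp0 : 0 ≤ p) (hp1 : p ≤ 1)
    (Sstar : Fin m → Finset (Fin P)) (hS : ∀ i, (Sstar i).card = K) (h : ℕ)
    (r : Fin m → ℝ)
    (hr : ∀ i : Fin m,
      r i = condProb m K P p
        (fun S B => (B i = true ∧ (S ∩ Sstar i).Nonempty) ∧
          ∀ j : Fin m, j ≠ i → ¬ (B j = true ∧ (S ∩ Sstar j).Nonempty))) :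
    (p * linkProb K P) ^ (h * m) *
        (1 - 2 * (h : ℝ) * (m : ℝ) ^ 2 * (p * linkProb K P) -
          2 * (h : ℝ) * p / (K : ℝ) *
          (∑ e ∈ Finset.univ.filter (fun e : Fin m × Fin m => e.1 < e.2),
          ((Sstar e.1 ∩ Sstar e.2).card : ℝ))) ≤
      ∏ i : Fin m, (r i) ^ h := by
  have hq : 0 ≤ p * linkProb K P := mul_nonneg hp0 (linkProb_nonneg K P)
  have hδsum := sum_sum_erase_add_le (c := p * linkProb K P) hq
    (g := fun i j => p * #(Sstar i ∩ Sstar j) / K) fun i j => by rw [inter_comm]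
  rw [Fintype.card_fin, ← sum_div, ← mul_sum] at hδsum
  have hprod := pow_mul_one_sub_sum_le_prod_pow univ hq (r := r)
    (δ := fun i => ∑ j ∈ univ.erase i, (p * linkProb K P + p * #(Sstar i ∩ Sstar j) / K))
    (fun i _ => by rw [hr i]; exact condProb_nonneg hp0 hp1 _)
    (fun i _ => sum_nonneg fun j _ => add_nonneg hq (by positivity))
    (fun i _ => by rw [hr i]; exact mul_one_sub_sum_le_condProb_alone hp0 hp1 hK hP hS i) h
  rw [card_univ, Fintype.card_fin] at hprod
  refine le_trans (mul_le_mul_of_nonneg_left ?_ (pow_nonneg hq _)) hprod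
  have hδsum' := mul_le_mul_of_nonneg_left hδsum h.cast_nonneg
  have hnonneg : 0 ≤ (h : ℝ) * (m ^ 2 * (p * linkProb K P)) := by positivity
  linear_combination hδsum' + hnonneg

theorem stmt10 (m K P : ℕ) (hm : 1 ≤ m) (hK : 1 ≤ K) (hP : 3 * K ≤ P)
    (p : ℝ) (hp0 : 0 ≤ p) (hp1 : p ≤ 1)
    (Sstar : Fin m → Finset (Fin P)) (hS : ∀ i, (Sstar i).card = K) (h : ℕ)
    (r : Fin m → ℝ)
    (hr : ∀ i : Fin m,
      r i = condProb m K P p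
        (fun S B => (B i = true ∧ (S ∩ Sstar i).Nonempty) ∧
          ∀ j : Fin m, j ≠ i → ¬ (B j = true ∧ (S ∩ Sstar j).Nonempty))) :
    (p * linkProb K P) ^ (h * m) *
        (1 - 2 * (h : ℝ) * (m : ℝ) ^ 2 * (p * linkProb K P) -
          2 * (h : ℝ) * p / (K : ℝ) *
          (∑ e ∈ Finset.univ.filter (fun e : Fin m × Fin m => e.1 < e.2),
          ((Sstar e.1 ∩ Sstar e.2).card : ℝ))) ≤
      ∏ i : Fin m, (r i) ^ h :=
  stmt10_general m K P hK hP p hp0 hp1 Sstar hS h r hr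
end

section
/- Let K ≥ 1 and P ≥ 3K be integers, let A and B be K-element subsets of {1,…,P} with |A ∩ B| = u (0 ≤ u ≤ K), and let S be a uniformly random K-element subset of {1,…,P}. With s := 1 − C(P−K,K)/C(P,K), the probability that S ∩ A ≠ ∅ and S ∩ B ≠ ∅ is at most s·u/K + 2·s². -/
/-!
The event is contained in "S meets A ∩ B" (a set of size u) or "S meets both A \ B and B \ A"
(disjoint sets of size K - u). By inclusion-exclusion and the log-concavity
C(n, K) C(n - 2a, K) ≤ C(n - a, K)², the second has probability at most
(1 - C(n - a, K) / C(n, K))² ≤ s².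

For the first, let m j = C(n - j, K) / C(n, K) be the probability of missing j fixed points. Then
m (j + 1) = m j (1 - q j) with q j = K / (n - j) increasing, so 1 - m u = ∑_{j<u} w j with
w j = m j q j and (1 - s) q j ≤ w j ≤ q j. Because q is increasing, the first u of the K weights
exceed their share (u / K) s by at most s (∑ q) / 4, and ∑ q ≤ s / (1 - s) ≤ 4 s when s ≤ 3/4.
When s > 3/4 the right-hand side exceeds 1.
-/

open Finset

lemma choose_succ_sub_choose_mul (m K : ℕ) :
    (((m + 1).choose K : ℝ) - m.choose K) * (m + 1) = K * (m + 1).choose K := by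
  cases K with
  | zero => simp
  | succ k =>
    have h : ((m + 1 : ℕ) * m.choose k : ℝ) = (m + 1).choose (k + 1) * (k + 1) := by
      exact_mod_cast Nat.add_one_mul_choose_eq m k
    have h' : ((m + 1).choose (k + 1) : ℝ) = m.choose k + m.choose (k + 1) := by
      exact_mod_cast Nat.choose_succ_succ' m k
    push_cast at h ⊢
    linear_combination h + ((m : ℝ) + 1) * h'

lemma choose_mul_choose_sub_two_mul_le_sq (n a K : ℕ) :
    n.choose K * (n - 2 * a).choose K ≤ (n - a).choose K ^ 2 := by
  have hdesc : n.descFactorial K * (n - 2 * a).descFactorial K ≤ (n - a).descFactorial K ^ 2 := by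
    simp only [Nat.descFactorial_eq_prod_range, ← prod_mul_distrib, sq]
    refine prod_le_prod' fun i _ => ?_
    rcases le_or_gt (2 * a + i) n with h | h
    · obtain ⟨c, rfl⟩ := Nat.exists_eq_add_of_le h
      have e1 : 2 * a + i + c - i = c + 2 * a := by omega
      have e2 : 2 * a + i + c - a - i = c + a := by omega
      have e3 : 2 * a + i + c - 2 * a - i = c := by omega
      rw [e1, e2, e3]
      nlinarith
    · simp [show n - 2 * a - i = 0 by omega]
  simp only [Nat.descFactorial_eq_factorial_mul_choose] at hdesc
  have hK : 0 < K.factorial ^ 2 := by positivity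
  nlinarith

noncomputable def hitProb (K n j : ℕ) : ℝ :=
  1 - ((n - j).choose K : ℝ) / (n.choose K : ℝ)

lemma hitProb_nonneg (K n j : ℕ) : 0 ≤ hitProb K n j := by
  rw [hitProb, sub_nonneg]
  exact div_le_one_of_le₀ (by exact_mod_cast Nat.choose_le_choose K (n.sub_le j)) (by positivity)

lemma hitProb_mono (K n : ℕ) {i j : ℕ} (hij : i ≤ j) : hitProb K n i ≤ hitProb K n j := by
  unfold hitProb
  gcongr

lemma mul_sum_range_le_of_monotone_sandwich {K u : ℕ} {s : ℝ} {w q : ℕ → ℝ} (huK : u ≤ K)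
    (hs : ∑ j ∈ range K, w j = s) (hs34 : s ≤ 3 / 4) (hq0 : ∀ j < K, 0 ≤ q j)
    (hq : ∀ i j, i ≤ j → j < K → q i ≤ q j)
    (hw : ∀ j < K, (1 - s) * q j ≤ w j ∧ w j ≤ q j) :
    K * ∑ j ∈ range u, w j ≤ u * s + K * s ^ 2 := by
  have hsplit : ∀ f : ℕ → ℝ, ∑ j ∈ range u, f j + ∑ j ∈ Ico u K, f j = ∑ j ∈ range K, f j :=
    fun f => sum_range_add_sum_Ico f huK
  set T := ∑ j ∈ range u, w j
  set R := ∑ j ∈ Ico u K, w j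
  set A := ∑ j ∈ range u, q j
  set B := ∑ j ∈ Ico u K, q j
  have hTR : T + R = s := (hsplit w).trans hs
  have hTA : T ≤ A := sum_le_sum fun j hj => (hw j (by simp at hj; omega)).2
  have hBR : (1 - s) * B ≤ R := by
    rw [mul_sum]
    exact sum_le_sum fun j hj => (hw j (by simp at hj; omega)).1
  have hQ : (1 - s) * (A + B) ≤ s := by
    rw [hsplit q, mul_sum]
    exact (sum_le_sum fun j hj => (hw j (by simpa using hj)).1).trans_eq hs
  have hA0 : 0 ≤ A := sum_nonneg fun j hj => hq0 j (by simp at hj; omega)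
  have hB0 : 0 ≤ B := sum_nonneg fun j hj => hq0 j (by simp at hj; omega)
  have hAB : ((K : ℝ) - u) * A ≤ u * B :=
    calc ((K : ℝ) - u) * A = ∑ i ∈ range u, (K - u) * q i := mul_sum _ _ _
      _ = ∑ i ∈ range u, ∑ _j ∈ Ico u K, q i := by simp [Nat.cast_sub huK]
      _ ≤ ∑ _i ∈ range u, ∑ j ∈ Ico u K, q j :=
          sum_le_sum fun i hi => sum_le_sum fun j hj => by
            simp only [mem_range, mem_Ico] at hi hj; exact hq i j (by omega) hj.2
      _ = u * B := by rw [sum_const, card_range, nsmul_eq_mul]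
  have hKu : (u : ℝ) ≤ K := by exact_mod_cast huK
  -- K T - u s = (K - u) T - u R, and the (1 - s) B in R outweighs (1 - s) (K - u) A.
  have hdefect : K * T - u * s ≤ s * ((K - u) * A) := by nlinarith
  have hQ4 : A + B ≤ 4 * s := by nlinarith
  have hA : K * ((K - u) * A) ≤ K ^ 2 * s :=
    calc K * ((K - u) * A) = (K - u) * (u * A + (K - u) * A) := by ring
      _ ≤ (K - u) * (u * (A + B)) := by nlinarith
      _ ≤ K ^ 2 / 4 * (A + B) := by nlinarith [sq_nonneg ((K : ℝ) - 2 * u)]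
      _ ≤ K ^ 2 * s := by nlinarith
  obtain rfl | hK := Nat.eq_zero_or_pos K
  · simp [show u = 0 by omega]
  · have hK' : (0 : ℝ) < K := by exact_mod_cast hK
    have : (K - u) * A ≤ K * s := by nlinarith
    nlinarith

lemma mul_hitProb_le {K n u : ℕ} (hKn : K ≤ n) (huK : u ≤ K) (hs : hitProb K n K ≤ 3 / 4) :
    K * hitProb K n u ≤ u * hitProb K n K + K * hitProb K n K ^ 2 := by
  have hN : (0 : ℝ) < n.choose K := by exact_mod_cast Nat.choose_pos hKn
  set m : ℕ → ℝ := fun j => ((n - j).choose K : ℝ) / n.choose K with hm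
  have hsum : ∀ j, hitProb K n j = ∑ i ∈ range j, (m i - m (i + 1)) := fun j => by
    simp only [sum_range_sub', hitProb, hm, Nat.sub_zero, div_self hN.ne']
  have hstep : ∀ j < n, m j - m (j + 1) = K / (n - j) * m j := fun j hj => by
    obtain ⟨c, hc⟩ : ∃ c, n - j = c + 1 := ⟨n - j - 1, by omega⟩
    have hcR : (n : ℝ) - j = c + 1 := by rw [← Nat.cast_sub hj.le, hc]; push_cast; ring
    have hc' : n - (j + 1) = c := by omega
    have hid := choose_succ_sub_choose_mul c K
    simp only [hm, hc, hc', hcR]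
    field_simp
    linear_combination hid
  have hm_le : ∀ j, m j ≤ 1 := fun j =>
    div_le_one_of_le₀ (by exact_mod_cast Nat.choose_le_choose K (n.sub_le j)) hN.le
  have hm_anti : ∀ j ≤ K, m K ≤ m j := fun j hj => by
    simp only [hm]; gcongr
  have hs' : 1 - hitProb K n K = m K := by rw [hitProb]; ring
  have hjn : ∀ j < K, (j : ℝ) < n := fun j hj => by exact_mod_cast hj.trans_le hKn
  have hq0 : ∀ j < K, (0 : ℝ) ≤ K / (n - j) := fun j hj =>
    div_nonneg K.cast_nonneg (by linarith [hjn j hj])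
  refine hsum u ▸ mul_sum_range_le_of_monotone_sandwich huK (hsum K).symm hs hq0
    (fun i j hij hj => ?_) (fun j hj => ?_)
  · have hij' : (i : ℝ) ≤ j := by exact_mod_cast hij
    exact div_le_div_of_nonneg_left K.cast_nonneg (by linarith [hjn j hj]) (by linarith)
  · rw [hs', hstep j (by omega)]
    exact ⟨by nlinarith [hm_anti j hj.le, hq0 j hj], mul_le_of_le_one_right (hq0 j hj) (hm_le j)⟩

section Hitting

variable {α : Type*} [Fintype α] [DecidableEq α]

def hitting (K : ℕ) (X : Finset α) : Finset (Finset α) :=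
  {S ∈ powersetCard K (univ : Finset α) | (S ∩ X).Nonempty}

lemma card_hitting_add (K : ℕ) (X : Finset α) :
    (hitting K X).card + (Fintype.card α - X.card).choose K = (Fintype.card α).choose K := by
  have hmiss : {S ∈ powersetCard K (univ : Finset α) | ¬(S ∩ X).Nonempty} = powersetCard K Xᶜ := by
    ext S
    simp [← not_disjoint_iff_nonempty_inter, subset_compl_iff_disjoint_right, and_comm]
  have h := card_filter_add_card_filter_not (s := powersetCard K (univ : Finset α))
    (fun S => (S ∩ X).Nonempty)
  rwa [hmiss, card_powersetCard, card_powersetCard, card_compl, card_univ] at h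

lemma card_hitting (K : ℕ) (X : Finset α) :
    ((hitting K X).card : ℝ) = (Fintype.card α).choose K - (Fintype.card α - X.card).choose K := by
  rw [eq_sub_iff_add_eq]
  exact_mod_cast card_hitting_add K X

lemma hitting_union (K : ℕ) (X Y : Finset α) :
    hitting K (X ∪ Y) = hitting K X ∪ hitting K Y := by
  simp only [hitting, ← filter_or, inter_union_distrib_left, union_nonempty]

lemma hitting_inter_hitting_subset (K : ℕ) (A B : Finset α) :
    hitting K A ∩ hitting K B ⊆ hitting K (A ∩ B) ∪ (hitting K (A \ B) ∩ hitting K (B \ A)) := by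
  intro S hS
  simp only [hitting, mem_inter, mem_union, mem_filter] at hS ⊢
  obtain ⟨⟨hSK, x, hx⟩, -, y, hy⟩ := hS
  rw [mem_inter] at hx hy
  by_cases hAB : (S ∩ (A ∩ B)).Nonempty
  · exact Or.inl ⟨hSK, hAB⟩
  · have hxB : x ∉ B := fun hxB => hAB ⟨x, by simp [hx.1, hx.2, hxB]⟩
    have hyA : y ∉ A := fun hyA => hAB ⟨y, by simp [hy.1, hy.2, hyA]⟩
    exact Or.inr ⟨⟨hSK, x, by simp [hx.1, hx.2, hxB]⟩, hSK, y, by simp [hy.1, hy.2, hyA]⟩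

lemma card_hitting_inter_hitting_le {K a : ℕ} {X Y : Finset α} (hK : K ≤ Fintype.card α)
    (hXY : Disjoint X Y) (hX : X.card = a) (hY : Y.card = a) :
    ((hitting K X ∩ hitting K Y).card : ℝ) / (Fintype.card α).choose K ≤
      hitProb K (Fintype.card α) a ^ 2 := by
  have hN : (0 : ℝ) < (Fintype.card α).choose K := by exact_mod_cast Nat.choose_pos hK
  have hincl : ((hitting K X ∩ hitting K Y).card : ℝ) + (hitting K (X ∪ Y)).card
      = (hitting K X).card + (hitting K Y).card := by
    rw [hitting_union]; exact_mod_cast card_inter_add_card_union _ _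
  have hlog : ((Fintype.card α).choose K : ℝ) * (Fintype.card α - 2 * a).choose K
      ≤ ((Fintype.card α - a).choose K : ℝ) ^ 2 := by
    exact_mod_cast choose_mul_choose_sub_two_mul_le_sq (Fintype.card α) a K
  rw [card_hitting, card_hitting, card_hitting, card_union_of_disjoint hXY, hX, hY,
    ← two_mul] at hincl
  rw [hitProb, one_sub_div hN.ne', div_pow, div_le_div_iff₀ hN (by positivity)]
  nlinarith

lemma card_hitting_inter_hitting_div_le {K : ℕ} {A B : Finset α} (hK : K ≤ Fintype.card α)
    (hAB : A.card = B.card) :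
    ((hitting K A ∩ hitting K B).card : ℝ) / (Fintype.card α).choose K ≤
      hitProb K (Fintype.card α) (A ∩ B).card + hitProb K (Fintype.card α) (A \ B).card ^ 2 := by
  have hN : (0 : ℝ) < (Fintype.card α).choose K := by exact_mod_cast Nat.choose_pos hK
  have hBA : (B \ A).card = (A \ B).card := by
    have := card_sdiff_add_card_inter A B
    have := card_sdiff_add_card_inter B A
    rw [inter_comm] at this
    omega
  have hcover : ((hitting K A ∩ hitting K B).card : ℝ) ≤
      (hitting K (A ∩ B)).card + (hitting K (A \ B) ∩ hitting K (B \ A)).card := by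
    exact_mod_cast (card_le_card (hitting_inter_hitting_subset K A B)).trans (card_union_le _ _)
  calc ((hitting K A ∩ hitting K B).card : ℝ) / (Fintype.card α).choose K
      ≤ ((hitting K (A ∩ B)).card + (hitting K (A \ B) ∩ hitting K (B \ A)).card) /
          (Fintype.card α).choose K := by gcongr
    _ = hitProb K (Fintype.card α) (A ∩ B).card +
          (hitting K (A \ B) ∩ hitting K (B \ A)).card / (Fintype.card α).choose K := by
        rw [add_div, card_hitting, hitProb, one_sub_div hN.ne']
    _ ≤ _ := by
        gcongr
        exact card_hitting_inter_hitting_le hK disjoint_sdiff_sdiff rfl hBA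

end Hitting

theorem stmt11 (K P u : ℕ) (hK : 1 ≤ K) (hP : 3 * K ≤ P)
    (A B : Finset (Fin P)) (hA : A.card = K) (hB : B.card = K)
    (hu : (A ∩ B).card = u) :
    ((((Finset.powersetCard K (Finset.univ : Finset (Fin P))).filter
        (fun S => (S ∩ A).Nonempty ∧ (S ∩ B).Nonempty)).card : ℝ) /
      (P.choose K : ℝ)) ≤
    linkProb K P * (u : ℝ) / (K : ℝ) + 2 * (linkProb K P) ^ 2 := by
  have hKP : K ≤ P := by omega
  rw [show linkProb K P = hitProb K P K from rfl, filter_and]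
  change ((hitting K A ∩ hitting K B).card : ℝ) / _ ≤ _
  have hs0 := hitProb_nonneg K P K
  have hK' : (0 : ℝ) < K := by exact_mod_cast hK
  by_cases hs : hitProb K P K ≤ 3 / 4
  · have hsplit := card_hitting_inter_hitting_div_le (K := K) (A := A) (B := B)
      (by simpa using hKP) (hA.trans hB.symm)
    rw [Fintype.card_fin, hu] at hsplit
    have hcommon : hitProb K P u ≤ hitProb K P K * u / K + hitProb K P K ^ 2 := by
      rw [div_add' _ _ _ hK'.ne', le_div_iff₀ hK']
      linarith [mul_hitProb_le hKP (hu ▸ hA ▸ card_le_card inter_subset_left) hs]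
    have hcross : hitProb K P (A \ B).card ^ 2 ≤ hitProb K P K ^ 2 :=
      pow_le_pow_left₀ (hitProb_nonneg K P _)
        (hitProb_mono K P ((card_le_card sdiff_subset).trans hA.le)) 2
    linarith
  · have hN : (0 : ℝ) < P.choose K := by exact_mod_cast Nat.choose_pos hKP
    have hle : ((hitting K A ∩ hitting K B).card : ℝ) ≤ P.choose K := by
      have h := (card_le_card (inter_subset_left (s₂ := hitting K B))).trans
        (Nat.le.intro (card_hitting_add K A))
      rw [Fintype.card_fin] at h
      exact_mod_cast h
    have : 0 ≤ hitProb K P K * u / K := by positivity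
    nlinarith [(div_le_one hN).2 hle]
end

section
/- Let m ≥ 1, K ≥ 1, and P > K be integers, and let u, v be integers with 0 ≤ u ≤ K and K ≤ v ≤ m·K. Then C(v,u)·C(P−v,K−u)/C(P,K) ≤ (1/u!)·(m·K²/(P−K))^u. -/
/-!
Bound `C(v,u) ≤ v^u/u! ≤ (mK)^u/u!` and `C(P-v,K-u) ≤ C(P,K-u)`. Counting pairs (a `K`-subset of
`[P]`, a `(K-u)`-subset of it) in two ways gives `C(P,K-u) · (P-K+u)_u = C(P,K) · K_u` with falling
factorials, whence `C(P,K-u)/C(P,K) ≤ (K/(P-K))^u`.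
-/

namespace Nat

theorem choose_sub_mul_descFactorial {P K u : ℕ} (hu : u ≤ K) (hK : K ≤ P) :
    P.choose (K - u) * (P - K + u).descFactorial u = P.choose K * K.descFactorial u := by
  have h := choose_mul (n := P) (k := K) (s := K - u) (sub_le K u)
  rw [Nat.sub_sub_self hu, choose_symm hu, show P - (K - u) = P - K + u by omega] at h
  rw [descFactorial_eq_factorial_mul_choose, descFactorial_eq_factorial_mul_choose,
    mul_left_comm, ← h, mul_left_comm]

theorem choose_sub_mul_pow_le {P K u : ℕ} (hu : u ≤ K) (hK : K ≤ P) :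
    P.choose (K - u) * (P - K) ^ u ≤ P.choose K * K ^ u :=
  calc P.choose (K - u) * (P - K) ^ u
      ≤ P.choose (K - u) * (P - K + u).descFactorial u := by
        refine Nat.mul_le_mul_left _ (le_trans (Nat.pow_le_pow_left ?_ u)
          (pow_sub_le_descFactorial _ u))
        omega
    _ = P.choose K * K.descFactorial u := choose_sub_mul_descFactorial hu hK
    _ ≤ P.choose K * K ^ u := Nat.mul_le_mul_left _ (descFactorial_le_pow K u)

end Nat

theorem choose_sub_div_choose_le {P K u : ℕ} (hu : u ≤ K) (hP : K < P) :
    (P.choose (K - u) : ℝ) / P.choose K ≤ ((K : ℝ) / (P - K)) ^ u := by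
  have hchoose : (0 : ℝ) < P.choose K := by exact_mod_cast Nat.choose_pos hP.le
  have hgap : (0 : ℝ) < P - K := sub_pos.mpr (by exact_mod_cast hP)
  rw [div_pow, div_le_div_iff₀ hchoose (pow_pos hgap u), ← Nat.cast_sub hP.le,
    mul_comm _ (P.choose K : ℝ)]
  exact_mod_cast Nat.choose_sub_mul_pow_le hu hP.le

theorem stmt15_general (m K P u v : ℕ) (hP : K < P)
    (hu : u ≤ K) (hv2 : v ≤ m * K) :
    ((v.choose u : ℝ) * ((P - v).choose (K - u) : ℝ)) / (P.choose K : ℝ) ≤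
      (1 / (Nat.factorial u : ℝ)) * ((m : ℝ) * (K : ℝ) ^ 2 / ((P : ℝ) - (K : ℝ))) ^ u := by
  have hv : (v.choose u : ℝ) ≤ ((m : ℝ) * K) ^ u / u.factorial :=
    (Nat.choose_le_pow_div u v).trans (by gcongr; exact_mod_cast hv2)
  have hPv : ((P - v).choose (K - u) : ℝ) ≤ P.choose (K - u) := by
    exact_mod_cast Nat.choose_le_choose (K - u) (Nat.sub_le P v)
  calc ((v.choose u : ℝ) * ((P - v).choose (K - u) : ℝ)) / (P.choose K : ℝ)
      ≤ (v.choose u : ℝ) * ((P.choose (K - u) : ℝ) / P.choose K) := by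
        rw [mul_div_assoc]; gcongr
    _ ≤ ((m : ℝ) * K) ^ u / u.factorial * ((K : ℝ) / (P - K)) ^ u := by
        gcongr
        exact choose_sub_div_choose_le hu hP
    _ = (1 / (Nat.factorial u : ℝ)) * ((m : ℝ) * (K : ℝ) ^ 2 / ((P : ℝ) - (K : ℝ))) ^ u := by
        ring

theorem stmt15 (m K P u v : ℕ) (hm : 1 ≤ m) (hK : 1 ≤ K) (hP : K < P)
    (hu : u ≤ K) (hv1 : K ≤ v) (hv2 : v ≤ m * K) :
    ((v.choose u : ℝ) * ((P - v).choose (K - u) : ℝ)) / (P.choose K : ℝ) ≤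
      (1 / (Nat.factorial u : ℝ)) * ((m : ℝ) * (K : ℝ) ^ 2 / ((P : ℝ) - (K : ℝ))) ^ u :=
  stmt15_general m K P u v hP hu hv2
end

section
/- Let m ≥ 1, K ≥ 1, and P > K be integers, let U be a subset of {1,…,P} with K ≤ |U| ≤ m·K, let a ≥ 0 be a real number, and let S be a uniformly random K-element subset of {1,…,P}. Then E[exp(a·|S ∩ U|)] ≤ exp((m·K²/(P−K))·e^{a}). -/
/-!
Write `z = exp a` and `u = #U`. Expanding `z ^ c = ((z - 1) + 1) ^ c` binomially, the expectation
becomes `∑ i, (z - 1) ^ i * E[C(#(S ∩ U), i)]`, and double counting pairs `T ⊆ S ∩ U` gives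
`E[C(#(S ∩ U), i)] = C(u, i) C(K, i) / C(P, i) ≤ (u K / (P - K)) ^ i / i!`. So the expectation is
bounded by a partial sum of the exponential series at `(z - 1) u K / (P - K) ≤ m K² z / (P - K)`.
-/

open Finset

theorem pow_eq_sum_range_sub_one_pow_mul_choose {R : Type*} [CommRing R] (z : R) {c n : ℕ}
    (hcn : c ≤ n) :
    z ^ c = ∑ i ∈ range (n + 1), (z - 1) ^ i * (c.choose i : R) := by
  conv_lhs => rw [← sub_add_cancel z 1, add_pow]
  simp only [one_pow, mul_one]
  refine sum_subset (range_subset_range.2 (by omega)) fun i _ hi => ?_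
  rw [Nat.choose_eq_zero_of_lt (by simpa using hi), Nat.cast_zero, mul_zero]

theorem Nat.pow_sub_div_factorial_le_choose {i k n : ℕ} (hik : i ≤ k + 1) (hkn : k ≤ n) :
    ((n - k : ℝ)) ^ i / i.factorial ≤ n.choose i := by
  refine le_trans ?_ (Nat.pow_le_choose i n)
  gcongr
  · exact sub_nonneg.2 (Nat.cast_le.2 hkn)
  · have : (i : ℝ) ≤ k + 1 := by exact_mod_cast hik
    rw [Nat.cast_sub (by omega)]
    push_cast
    linarith

theorem Nat.choose_mul_choose_div_choose_le {u i k n : ℕ} (hik : i ≤ k) (hkn : k < n) :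
    ((u.choose i * (n - i).choose (k - i) : ℕ) : ℝ) / n.choose k ≤
      (u * k / (n - k) : ℝ) ^ i / i.factorial := by
  have hnk : (0 : ℝ) < n - k := sub_pos.2 (Nat.cast_lt.2 hkn)
  have hni : (0 : ℝ) < n.choose i := Nat.cast_pos.2 (Nat.choose_pos (by omega))
  -- `C(n,k) C(k,i) = C(n,i) C(n-i,k-i)` turns the left side into `C(u,i) C(k,i) / C(n,i)`.
  have hrw : ((u.choose i * (n - i).choose (k - i) : ℕ) : ℝ) / n.choose k =
      u.choose i * k.choose i / n.choose i := by
    have hmul := congrArg (Nat.cast : ℕ → ℝ) (Nat.choose_mul (n := n) hik)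
    push_cast at hmul
    have : (0 : ℝ) < n.choose k := Nat.cast_pos.2 (Nat.choose_pos hkn.le)
    field_simp
    push_cast
    linear_combination (-(u.choose i : ℝ)) * hmul
  calc ((u.choose i * (n - i).choose (k - i) : ℕ) : ℝ) / n.choose k
      = u.choose i * k.choose i / n.choose i := hrw
    _ ≤ (u ^ i / i.factorial) * (k ^ i / i.factorial) / ((n - k) ^ i / i.factorial) := by
      gcongr
      · exact Nat.choose_le_pow_div i u
      · exact Nat.choose_le_pow_div i k
      · exact Nat.pow_sub_div_factorial_le_choose (by omega) hkn.le
    _ = (u * k / (n - k) : ℝ) ^ i / i.factorial := by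
      rw [div_pow, mul_pow]
      field_simp

namespace Finset

variable {α : Type*} [DecidableEq α]

theorem sum_choose_card_inter_powersetCard {s U : Finset α} (hU : U ⊆ s) {j k : ℕ}
    (hjk : j ≤ k) :
    ∑ S ∈ s.powersetCard k, (#(S ∩ U)).choose j = (#U).choose j * (#s - j).choose (k - j) := by
  have choose_eq_card (S : Finset α) :
      (#(S ∩ U)).choose j = #{T ∈ U.powersetCard j | T ⊆ S} := by
    rw [← card_powersetCard]
    congr 1
    ext T
    simp only [mem_powersetCard, mem_filter, subset_inter_iff]
    tauto
  simp_rw [choose_eq_card, card_filter]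
  rw [sum_comm, ← smul_eq_mul, ← card_powersetCard j U, ← sum_const]
  refine sum_congr rfl fun T hT => ?_
  rw [mem_powersetCard] at hT
  rw [← card_filter, card_filter_powersetCard_subset T s k (hT.1.trans hU) (hT.2 ▸ hjk), hT.2]

theorem sum_pow_card_inter_powersetCard {R : Type*} [CommRing R] {s U : Finset α} (hU : U ⊆ s)
    (k : ℕ) (z : R) :
    ∑ S ∈ s.powersetCard k, z ^ #(S ∩ U) =
      ∑ i ∈ range (k + 1), (z - 1) ^ i * ((#U).choose i * (#s - i).choose (k - i) : ℕ) := by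
  have hcard {S} (hS : S ∈ s.powersetCard k) : #(S ∩ U) ≤ k :=
    (card_le_card inter_subset_left).trans (mem_powersetCard.1 hS).2.le
  rw [sum_congr rfl fun S hS => pow_eq_sum_range_sub_one_pow_mul_choose z (hcard hS), sum_comm]
  refine sum_congr rfl fun i hi => ?_
  rw [← mul_sum, ← Nat.cast_sum,
    sum_choose_card_inter_powersetCard hU (Nat.lt_succ_iff.1 (mem_range.1 hi))]

theorem sum_pow_card_inter_powersetCard_div_le_exp {s U : Finset α} (hU : U ⊆ s) {k : ℕ}
    (hk : k < #s) {z : ℝ} (hz : 1 ≤ z) :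
    (∑ S ∈ s.powersetCard k, z ^ #(S ∩ U)) / (#s).choose k ≤
      Real.exp ((z - 1) * (#U * k / (#s - k))) := by
  have hnk : (0 : ℝ) < #s - k := sub_pos.2 (Nat.cast_lt.2 hk)
  rw [sum_pow_card_inter_powersetCard hU, sum_div]
  calc ∑ i ∈ range (k + 1),
        (z - 1) ^ i * ((#U).choose i * (#s - i).choose (k - i) : ℕ) / (#s).choose k
      ≤ ∑ i ∈ range (k + 1), ((z - 1) * (#U * k / (#s - k))) ^ i / i.factorial := by
        refine sum_le_sum fun i hi => ?_
        rw [mul_div_assoc, mul_pow, mul_div_assoc]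
        exact mul_le_mul_of_nonneg_left
          (Nat.choose_mul_choose_div_choose_le (Nat.lt_succ_iff.1 (mem_range.1 hi)) hk)
          (pow_nonneg (sub_nonneg.2 hz) i)
    _ ≤ _ := Real.sum_le_exp_of_nonneg (by have := sub_nonneg.2 hz; positivity) _

end Finset

theorem stmt16_general (m K P : ℕ) (hP : K < P)
    (U : Finset (Fin P)) (hU2 : U.card ≤ m * K)
    (a : ℝ) (ha : 0 ≤ a) :
    (1 / (P.choose K : ℝ)) *
        ∑ S ∈ Finset.powersetCard K (Finset.univ : Finset (Fin P)),
          Real.exp (a * ((S ∩ U).card : ℝ)) ≤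
      Real.exp ((m : ℝ) * (K : ℝ) ^ 2 / ((P : ℝ) - (K : ℝ)) * Real.exp a) := by
  have hPK : (0 : ℝ) < P - K := sub_pos.2 (Nat.cast_lt.2 hP)
  have hexp (S : Finset (Fin P)) : Real.exp (a * #(S ∩ U)) = Real.exp a ^ #(S ∩ U) := by
    rw [mul_comm, Real.exp_nat_mul]
  have hbound := sum_pow_card_inter_powersetCard_div_le_exp (subset_univ U)
    (by simpa using hP) (Real.one_le_exp ha)
  simp only [card_univ, Fintype.card_fin] at hbound
  simp_rw [hexp, one_div_mul_eq_div]
  refine hbound.trans (Real.exp_le_exp.2 ?_)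
  have hU : (#U : ℝ) ≤ m * K := by exact_mod_cast hU2
  calc (Real.exp a - 1) * (#U * K / (P - K))
      ≤ Real.exp a * (m * K * K / (P - K)) := by gcongr; linarith [Real.one_le_exp ha]
    _ = m * K ^ 2 / (P - K) * Real.exp a := by ring

theorem stmt16 (m K P : ℕ) (hm : 1 ≤ m) (hK : 1 ≤ K) (hP : K < P)
    (U : Finset (Fin P)) (hU1 : K ≤ U.card) (hU2 : U.card ≤ m * K)
    (a : ℝ) (ha : 0 ≤ a) :
    (1 / (P.choose K : ℝ)) *
        ∑ S ∈ Finset.powersetCard K (Finset.univ : Finset (Fin P)),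
          Real.exp (a * ((S ∩ U).card : ℝ)) ≤
      Real.exp ((m : ℝ) * (K : ℝ) ^ 2 / ((P : ℝ) - (K : ℝ)) * Real.exp a) :=
  stmt16_general m K P hP U hU2 a ha
end
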